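/- Let n, m ≥ 1. Let x : [0, ∞) → ℝ^n and y : [0, ∞) → ℝ^m be differentiable with x_i(t) ≥ 0, y_j(t) ≥ 0, ∑_i x_i(t) = 1, and ∑_j y_j(t) = 1 for all t. Suppose x′ = F(x) and y′ = G(y) where F : Fin n → MvPolynomial (Fin n) ℚ and G : Fin m → MvPolynomial (Fin m) ℚ are such that each F_i (respectively G_j) is a homogeneous polynomial of degree 2 of the form p_i − X_i·q_i (respectively p_j − Y_j·q_j) with p, q having nonnegative coefficients, the coefficient of X_i² in p_i (respectively Y_j² in p_j) is zero, and ∑_i F_i = 0, ∑_j G_j = 0. Then there exists H indexed by pairs (i,j) ∈ Fin n × Fin m over variables Z_{(i,j)} such that: (1) each H_{(i,j)} is a homogeneous polynomial of degree 2 of the form P_{(i,j)} − Z_{(i,j)}·Q_{(i,j)} with P_{(i,j)}, Q_{(i,j)} having nonnegative coefficients and the coefficient of Z_{(i,j)}² in P_{(i,j)} being zero; (2) ∑_{(i,j)} H_{(i,j)} = 0; and (3) the function z defined by z_{(i,j)}(t) = x_i(t)·y_j(t) satisfies z′(t) = H(z(t)) for all t. -/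

import Mathlib

open MvPolynomial

/-!
Write `z = x ⊗ y`, i.e. `z (k, l) = x k * y l`. Since `∑ l, y l = 1`, the marginal
`∑ l, z (k, l)` equals `x k`, so a polynomial in `x` lifts to one in `z` of the same degree, and
symmetrically for `y`. The derivative `(x_i y_j)' = F_i(x) y_j + x_i G_j(y)` is cubic; it becomes
quadratic in `z` by Euler's identity `2 p = ∑ k, X k * ∂_k p`, which gives
`p(x) y_j = ½ ∑ k, z (k, j) (∂_k p)(x)`, while `x_i q(x) y_j = z (i, j) q(x)` for
`F_i = p - X_i q`. These substitutions preserve nonnegative coefficients and homogeneity. The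
coefficient of `Z_{(i,j)}²` in a quadratic form is its value at the unit vector
`e_{(i,j)} = e_i ⊗ e_j`, which is `p_i(e_i) + g_j(e_j) = 0` for the positive parts `p_i`, `g_j` of
`F_i`, `G_j`.
Summing the lift of `F_i(x) y_j` over `j` gives the lift of `F_i`, so conservation is inherited.
-/

namespace MvPolynomial

section NonnegCoeffs

variable (σ R : Type*) [CommSemiring R] [PartialOrder R] [IsOrderedRing R]

def nonnegCoeffs : Subsemiring (MvPolynomial σ R) where
  carrier := {p | ∀ d, 0 ≤ p.coeff d}
  mul_mem' {p q} hp hq d := by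
    classical
    rw [coeff_mul]
    exact Finset.sum_nonneg fun e _ => mul_nonneg (hp _) (hq _)
  one_mem' d := by
    classical
    rw [coeff_one]
    split_ifs <;> simp
  add_mem' hp hq d := by
    rw [coeff_add]
    exact add_nonneg (hp d) (hq d)
  zero_mem' _ := le_of_eq (coeff_zero _).symm

variable {σ R}

theorem C_mem_nonnegCoeffs {c : R} (hc : 0 ≤ c) : C c ∈ nonnegCoeffs σ R := fun d => by
  classical
  rw [coeff_C]
  split_ifs <;> simp [hc]

theorem X_mem_nonnegCoeffs (i : σ) : X i ∈ nonnegCoeffs σ R := fun d => by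
  classical
  rw [X, coeff_monomial]
  split_ifs <;> simp

theorem aeval_mem_nonnegCoeffs {τ : Type*} {p : MvPolynomial σ R} (hp : p ∈ nonnegCoeffs σ R)
    {g : σ → MvPolynomial τ R} (hg : ∀ i, g i ∈ nonnegCoeffs τ R) :
    aeval g p ∈ nonnegCoeffs τ R := by
  rw [p.as_sum, map_sum]
  refine Subsemiring.sum_mem _ fun d _ => ?_
  rw [aeval_monomial]
  exact Subsemiring.mul_mem _ (C_mem_nonnegCoeffs (hp d))
    (Subsemiring.prod_mem _ fun i _ => Subsemiring.pow_mem _ (hg i) _)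

theorem rename_mem_nonnegCoeffs {τ : Type*} {p : MvPolynomial σ R} (hp : p ∈ nonnegCoeffs σ R)
    (f : σ → τ) : rename f p ∈ nonnegCoeffs τ R := by
  rw [← aeval_X_left_apply (rename f p), aeval_rename]
  exact aeval_mem_nonnegCoeffs hp fun i => X_mem_nonnegCoeffs (f i)

theorem pderiv_mem_nonnegCoeffs {p : MvPolynomial σ R}
    (hp : p ∈ nonnegCoeffs σ R) (i : σ) : pderiv i p ∈ nonnegCoeffs σ R := fun d => by
  rw [coeff_pderiv]
  exact mul_nonneg (hp _) (add_nonneg (Nat.cast_nonneg _) zero_le_one)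

end NonnegCoeffs

theorem IsHomogeneous.coeff_single_eq_eval {σ R : Type*} [CommSemiring R] [DecidableEq σ]
    {p : MvPolynomial σ R} {k : ℕ} (hp : p.IsHomogeneous k) (i : σ) :
    p.coeff (Finsupp.single i k) = eval (Pi.single i 1) p := by
  rw [eval_eq, Finset.sum_eq_single (Finsupp.single i k)]
  · rcases eq_or_ne k 0 with rfl | hk
    · simp
    · simp [Finsupp.support_single _ hk]
  · intro d hd hne
    obtain ⟨l, hl, hli⟩ : ∃ l ∈ d.support, l ≠ i := by
      by_contra! h
      obtain ⟨b, rfl⟩ := Finsupp.support_subset_singleton'.mp fun l hl =>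
        Finset.mem_singleton.mpr (h l hl)
      have hdeg : (Finsupp.single i b).degree = k := by
        rw [Finsupp.degree_eq_weight_one]
        exact hp (mem_support_iff.mp hd)
      rw [Finsupp.degree_single] at hdeg
      exact hne (hdeg ▸ rfl)
    rw [Finset.prod_eq_zero hl (by simp [Pi.single_eq_of_ne hli, Finsupp.mem_support_iff.mp hl]),
      mul_zero]
  · intro h
    rw [notMem_support_iff.mp h, zero_mul]

end MvPolynomial

namespace ProductProtocol

variable {σ τ : Type*}

def IsPPQuadraticForm (i : σ) (f : MvPolynomial σ ℚ) : Prop :=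
  ∃ p q : MvPolynomial σ ℚ, (∀ d, 0 ≤ p.coeff d) ∧ (∀ d, 0 ≤ q.coeff d) ∧
    p.IsHomogeneous 2 ∧ q.IsHomogeneous 1 ∧ p.coeff (Finsupp.single i 2) = 0 ∧ f = p - X i * q

section Marginal

variable {R : Type*} [CommSemiring R]

variable (σ τ) in
noncomputable def fstMarginal [Fintype τ] : MvPolynomial σ R →ₐ[R] MvPolynomial (σ × τ) R :=
  aeval fun k => ∑ l, X (k, l)

theorem fstMarginal_X [Fintype τ] (k : σ) :
    fstMarginal σ τ (X k : MvPolynomial σ R) = ∑ l, X (k, l) :=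
  aeval_X _ _

variable (σ τ) in
noncomputable def sndMarginal [Fintype σ] : MvPolynomial τ R →ₐ[R] MvPolynomial (σ × τ) R :=
  (rename Prod.swap).comp (fstMarginal τ σ)

theorem aeval_fstMarginal [Fintype τ] {A : Type*} [CommSemiring A] [Algebra R A] (x : σ → A)
    {y : τ → A} (hy : ∑ l, y l = 1) (f : MvPolynomial σ R) :
    aeval (fun kl : σ × τ => x kl.1 * y kl.2) (fstMarginal σ τ f) = aeval x f := by
  rw [fstMarginal, comp_aeval_apply]
  congr 2 with k
  simp [← Finset.mul_sum, hy]

theorem aeval_sndMarginal [Fintype σ] {A : Type*} [CommSemiring A] [Algebra R A] {x : σ → A}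
    (y : τ → A) (hx : ∑ k, x k = 1) (f : MvPolynomial τ R) :
    aeval (fun kl : σ × τ => x kl.1 * y kl.2) (sndMarginal σ τ f) = aeval y f := by
  rw [sndMarginal, AlgHom.comp_apply, aeval_rename, ← aeval_fstMarginal y hx f]
  congr 2 with lk
  exact mul_comm _ _

theorem isHomogeneous_fstMarginal [Fintype τ] {f : MvPolynomial σ R} {n : ℕ}
    (hf : f.IsHomogeneous n) : (fstMarginal σ τ f).IsHomogeneous n := by
  simpa only [one_mul, fstMarginal] using hf.aeval (fun k => ∑ l : τ, X (k, l)) fun k =>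
    IsHomogeneous.sum _ _ _ fun l _ => isHomogeneous_X R (k, l)

theorem isHomogeneous_sndMarginal [Fintype σ] {f : MvPolynomial τ R} {n : ℕ}
    (hf : f.IsHomogeneous n) : (sndMarginal σ τ f).IsHomogeneous n :=
  (isHomogeneous_fstMarginal hf).rename_isHomogeneous

variable [PartialOrder R] [IsOrderedRing R]

theorem fstMarginal_mem_nonnegCoeffs [Fintype τ] {f : MvPolynomial σ R}
    (hf : f ∈ nonnegCoeffs σ R) : fstMarginal σ τ f ∈ nonnegCoeffs (σ × τ) R :=
  aeval_mem_nonnegCoeffs hf fun k => Subsemiring.sum_mem _ fun l _ => X_mem_nonnegCoeffs (k, l)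

theorem sndMarginal_mem_nonnegCoeffs [Fintype σ] {f : MvPolynomial τ R}
    (hf : f ∈ nonnegCoeffs τ R) : sndMarginal σ τ f ∈ nonnegCoeffs (σ × τ) R :=
  rename_mem_nonnegCoeffs (fstMarginal_mem_nonnegCoeffs hf) _

end Marginal

section Product

variable [Fintype σ] [Fintype τ]

noncomputable def mulSnd (p : MvPolynomial σ ℚ) (j : τ) : MvPolynomial (σ × τ) ℚ :=
  C 2⁻¹ * ∑ k, X (k, j) * fstMarginal σ τ (pderiv k p)

noncomputable def mulFst (i : σ) (g : MvPolynomial τ ℚ) : MvPolynomial (σ × τ) ℚ :=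
  rename Prod.swap (mulSnd g i)

theorem aeval_mulSnd {A : Type*} [CommRing A] [Algebra ℚ A] {p : MvPolynomial σ ℚ}
    (hp : p.IsHomogeneous 2) (x : σ → A) {y : τ → A} (hy : ∑ l, y l = 1) (j : τ) :
    aeval (fun kl : σ × τ => x kl.1 * y kl.2) (mulSnd p j) = aeval x p * y j := by
  have euler : ∑ k, x k * aeval x (pderiv k p) = 2 * aeval x p := by
    simpa using congrArg (aeval x) hp.sum_X_mul_pderiv
  have half : algebraMap ℚ A 2⁻¹ * 2 = 1 := by
    rw [← map_ofNat (algebraMap ℚ A) 2, ← map_mul]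
    norm_num
  simp only [mulSnd, map_mul, aeval_C, map_sum, aeval_X, aeval_fstMarginal x hy]
  calc algebraMap ℚ A 2⁻¹ * ∑ k, x k * y j * aeval x (pderiv k p)
      = algebraMap ℚ A 2⁻¹ * (y j * ∑ k, x k * aeval x (pderiv k p)) := by
        simp only [Finset.mul_sum]
        exact Finset.sum_congr rfl fun k _ => by ring
    _ = aeval x p * y j := by rw [euler]; linear_combination (aeval x p * y j) * half

theorem aeval_mulFst {A : Type*} [CommRing A] [Algebra ℚ A] {g : MvPolynomial τ ℚ}
    (hg : g.IsHomogeneous 2) {x : σ → A} (y : τ → A) (hx : ∑ k, x k = 1) (i : σ) :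
    aeval (fun kl : σ × τ => x kl.1 * y kl.2) (mulFst i g) = x i * aeval y g := by
  have hswap : (fun kl : σ × τ => x kl.1 * y kl.2) ∘ Prod.swap = fun lk => y lk.1 * x lk.2 :=
    funext fun _ => mul_comm _ _
  rw [mulFst, aeval_rename, hswap, aeval_mulSnd hg y hx, mul_comm]

theorem sum_mulSnd {p : MvPolynomial σ ℚ} (hp : p.IsHomogeneous 2) :
    ∑ j, mulSnd p j = fstMarginal σ τ p := by
  simp only [mulSnd, ← Finset.mul_sum]
  rw [Finset.sum_comm]
  simp only [← Finset.sum_mul, ← fstMarginal_X, ← map_mul, ← map_sum, hp.sum_X_mul_pderiv,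
    nsmul_eq_mul]
  rw [map_mul, map_natCast, Nat.cast_ofNat, ← mul_assoc, ← map_ofNat C 2, ← C_mul,
    inv_mul_cancel₀ two_ne_zero, C_1, one_mul]

theorem sum_mulSnd_sub {p : MvPolynomial σ ℚ} (hp : p.IsHomogeneous 2) (q : MvPolynomial σ ℚ)
    (i : σ) : ∑ j, (mulSnd p j - X (i, j) * fstMarginal σ τ q) = fstMarginal σ τ (p - X i * q) := by
  rw [Finset.sum_sub_distrib, sum_mulSnd hp, ← Finset.sum_mul, map_sub, map_mul, fstMarginal_X]

theorem sum_mulFst_sub {g : MvPolynomial τ ℚ} (hg : g.IsHomogeneous 2) (r : MvPolynomial τ ℚ)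
    (j : τ) : ∑ i, (mulFst i g - X (i, j) * sndMarginal σ τ r) = sndMarginal σ τ (g - X j * r) := by
  simpa [mulFst, sndMarginal, map_sum] using
    congrArg (rename Prod.swap) (sum_mulSnd_sub (τ := σ) hg r j)

theorem isHomogeneous_mulSnd {p : MvPolynomial σ ℚ} (hp : p.IsHomogeneous 2) (j : τ) :
    (mulSnd p j).IsHomogeneous 2 :=
  IsHomogeneous.C_mul (IsHomogeneous.sum _ _ _ fun k _ =>
    (isHomogeneous_X ℚ (k, j)).mul (isHomogeneous_fstMarginal (hp.pderiv (i := k)))) _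

theorem isHomogeneous_mulFst {g : MvPolynomial τ ℚ} (hg : g.IsHomogeneous 2) (i : σ) :
    (mulFst i g).IsHomogeneous 2 :=
  (isHomogeneous_mulSnd hg i).rename_isHomogeneous

theorem mulSnd_mem_nonnegCoeffs {p : MvPolynomial σ ℚ} (hp : p ∈ nonnegCoeffs σ ℚ) (j : τ) :
    mulSnd p j ∈ nonnegCoeffs (σ × τ) ℚ :=
  Subsemiring.mul_mem _ (C_mem_nonnegCoeffs (by norm_num)) <| Subsemiring.sum_mem _ fun k _ =>
    Subsemiring.mul_mem _ (X_mem_nonnegCoeffs _)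
      (fstMarginal_mem_nonnegCoeffs (pderiv_mem_nonnegCoeffs hp k))

theorem mulFst_mem_nonnegCoeffs {g : MvPolynomial τ ℚ} (hg : g ∈ nonnegCoeffs τ ℚ) (i : σ) :
    mulFst i g ∈ nonnegCoeffs (σ × τ) ℚ :=
  rename_mem_nonnegCoeffs (mulSnd_mem_nonnegCoeffs hg i) _

theorem coeff_mulSnd_add_mulFst [DecidableEq σ] [DecidableEq τ] {p : MvPolynomial σ ℚ}
    {g : MvPolynomial τ ℚ} (hp : p.IsHomogeneous 2) (hg : g.IsHomogeneous 2) (i : σ) (j : τ) :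
    (mulSnd p j + mulFst i g).coeff (Finsupp.single (i, j) 2) =
      p.coeff (Finsupp.single i 2) + g.coeff (Finsupp.single j 2) := by
  have hunit : (Pi.single (i, j) 1 : σ × τ → ℚ) =
      fun kl => (Pi.single i 1 : σ → ℚ) kl.1 * (Pi.single j 1 : τ → ℚ) kl.2 := by
    ext ⟨k, l⟩
    simp only [Pi.single_apply, Prod.mk.injEq, ite_and]
    split_ifs <;> simp
  rw [((isHomogeneous_mulSnd hp j).add (isHomogeneous_mulFst hg i)).coeff_single_eq_eval,
    hp.coeff_single_eq_eval, hg.coeff_single_eq_eval, hunit, ← aeval_eq_eval, map_add,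
    aeval_mulSnd hp _ (by simp), aeval_mulFst hg _ (by simp)]
  simp

end Product

theorem exists_productSystem [Fintype σ] [Fintype τ] [DecidableEq σ] [DecidableEq τ]
    (A : Type*) [CommRing A] [Algebra ℚ A]
    {F : σ → MvPolynomial σ ℚ} {G : τ → MvPolynomial τ ℚ}
    (hF : ∀ i, IsPPQuadraticForm i (F i)) (hG : ∀ j, IsPPQuadraticForm j (G j))
    (hFsum : ∑ i, F i = 0) (hGsum : ∑ j, G j = 0) :
    ∃ H : σ × τ → MvPolynomial (σ × τ) ℚ, (∀ ij, IsPPQuadraticForm ij (H ij)) ∧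
      ∑ ij, H ij = 0 ∧
      ∀ (x : σ → A) (y : τ → A), ∑ k, x k = 1 → ∑ l, y l = 1 → ∀ ij,
        aeval (fun kl : σ × τ => x kl.1 * y kl.2) (H ij) =
          aeval x (F ij.1) * y ij.2 + x ij.1 * aeval y (G ij.2) := by
  choose p q hp hq hph hqh hp0 hFpq using hF
  choose g r hg hr hgh hrh hg0 hGgr using hG
  refine ⟨fun ij => (mulSnd (p ij.1) ij.2 - X ij * fstMarginal σ τ (q ij.1)) +
    (mulFst ij.1 (g ij.2) - X ij * sndMarginal σ τ (r ij.2)), fun ⟨i, j⟩ => ?_, ?_,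
    fun x y hx hy ⟨i, j⟩ => ?_⟩
  · refine ⟨mulSnd (p i) j + mulFst i (g j), fstMarginal σ τ (q i) + sndMarginal σ τ (r j),
      add_mem (mulSnd_mem_nonnegCoeffs (hp i) j) (mulFst_mem_nonnegCoeffs (hg j) i),
      add_mem (fstMarginal_mem_nonnegCoeffs (hq i)) (sndMarginal_mem_nonnegCoeffs (hr j)),
      (isHomogeneous_mulSnd (hph i) j).add (isHomogeneous_mulFst (hgh j) i),
      (isHomogeneous_fstMarginal (hqh i)).add (isHomogeneous_sndMarginal (hrh j)), ?_, by ring⟩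
    rw [coeff_mulSnd_add_mulFst (hph i) (hgh j), hp0, hg0, add_zero]
  · rw [Fintype.sum_prod_type]
    simp only [Finset.sum_add_distrib]
    rw [Finset.sum_comm (f := fun i j => mulFst i (g j) - X (i, j) * sndMarginal σ τ (r j))]
    simp only [sum_mulSnd_sub (hph _), sum_mulFst_sub (hgh _), ← hFpq, ← hGgr, ← map_sum, hFsum,
      hGsum, map_zero, add_zero]
  · simp only [map_add, map_sub, map_mul, aeval_X, aeval_fstMarginal x hy, aeval_sndMarginal y hx,
      aeval_mulSnd (hph i) x hy, aeval_mulFst (hgh j) y hx, hFpq, hGgr]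
    ring

end ProductProtocol

theorem stmt_12_general (n m : ℕ)
    (x : ℝ → (Fin n → ℝ)) (y : ℝ → (Fin m → ℝ))
    (hxsum : ∀ t : ℝ, 0 ≤ t → (∑ i : Fin n, x t i) = 1)
    (hysum : ∀ t : ℝ, 0 ≤ t → (∑ j : Fin m, y t j) = 1)
    (F : Fin n → MvPolynomial (Fin n) ℚ) (G : Fin m → MvPolynomial (Fin m) ℚ)
    (hF : ∀ i : Fin n, ∃ p q : MvPolynomial (Fin n) ℚ,
      (∀ d, 0 ≤ p.coeff d) ∧ (∀ d, 0 ≤ q.coeff d) ∧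
      p.IsHomogeneous 2 ∧ q.IsHomogeneous 1 ∧
      p.coeff (Finsupp.single i 2) = 0 ∧ F i = p - X i * q)
    (hG : ∀ j : Fin m, ∃ p q : MvPolynomial (Fin m) ℚ,
      (∀ d, 0 ≤ p.coeff d) ∧ (∀ d, 0 ≤ q.coeff d) ∧
      p.IsHomogeneous 2 ∧ q.IsHomogeneous 1 ∧
      p.coeff (Finsupp.single j 2) = 0 ∧ G j = p - X j * q)
    (hFsum : (∑ i : Fin n, F i) = 0) (hGsum : (∑ j : Fin m, G j) = 0)
    (hxode : ∀ t : ℝ, 0 ≤ t → ∀ i : Fin n,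
      HasDerivAt (fun t => x t i) (aeval (x t) (F i)) t)
    (hyode : ∀ t : ℝ, 0 ≤ t → ∀ j : Fin m,
      HasDerivAt (fun t => y t j) (aeval (y t) (G j)) t) :
    ∃ H : Fin n × Fin m → MvPolynomial (Fin n × Fin m) ℚ,
      (∀ ij : Fin n × Fin m, ∃ P Q : MvPolynomial (Fin n × Fin m) ℚ,
        (∀ e, 0 ≤ P.coeff e) ∧ (∀ e, 0 ≤ Q.coeff e) ∧
        P.IsHomogeneous 2 ∧ Q.IsHomogeneous 1 ∧
        P.coeff (Finsupp.single ij 2) = 0 ∧ H ij = P - X ij * Q) ∧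
      (∑ ij : Fin n × Fin m, H ij) = 0 ∧
      (∀ t : ℝ, 0 ≤ t → ∀ ij : Fin n × Fin m,
        HasDerivAt (fun t => x t ij.1 * y t ij.2)
          (aeval (fun kl : Fin n × Fin m => x t kl.1 * y t kl.2) (H ij)) t) := by
  obtain ⟨H, hH, hsum, heval⟩ := ProductProtocol.exists_productSystem ℝ hF hG hFsum hGsum
  refine ⟨H, hH, hsum, fun t ht ij => ?_⟩
  rw [heval (x t) (y t) (hxsum t ht) (hysum t ht)]
  exact (hxode t ht ij.1).mul (hyode t ht ij.2)

/-- Product-protocol lemma (Lemma 2): the pairwise products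
`z_{(i,j)} = x_i · y_j` of two PP-implementable quadratic form systems on
their probability simplices satisfy a PP-implementable quadratic form
system. -/
theorem stmt_12 (n m : ℕ) (hn : 1 ≤ n) (hm : 1 ≤ m)
    (x : ℝ → (Fin n → ℝ)) (y : ℝ → (Fin m → ℝ))
    (hxpos : ∀ t : ℝ, 0 ≤ t → ∀ i : Fin n, 0 ≤ x t i)
    (hypos : ∀ t : ℝ, 0 ≤ t → ∀ j : Fin m, 0 ≤ y t j)
    (hxsum : ∀ t : ℝ, 0 ≤ t → (∑ i : Fin n, x t i) = 1)
    (hysum : ∀ t : ℝ, 0 ≤ t → (∑ j : Fin m, y t j) = 1)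
    (F : Fin n → MvPolynomial (Fin n) ℚ) (G : Fin m → MvPolynomial (Fin m) ℚ)
    (hF : ∀ i : Fin n, ∃ p q : MvPolynomial (Fin n) ℚ,
      (∀ d, 0 ≤ p.coeff d) ∧ (∀ d, 0 ≤ q.coeff d) ∧
      p.IsHomogeneous 2 ∧ q.IsHomogeneous 1 ∧
      p.coeff (Finsupp.single i 2) = 0 ∧ F i = p - X i * q)
    (hG : ∀ j : Fin m, ∃ p q : MvPolynomial (Fin m) ℚ,
      (∀ d, 0 ≤ p.coeff d) ∧ (∀ d, 0 ≤ q.coeff d) ∧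
      p.IsHomogeneous 2 ∧ q.IsHomogeneous 1 ∧
      p.coeff (Finsupp.single j 2) = 0 ∧ G j = p - X j * q)
    (hFsum : (∑ i : Fin n, F i) = 0) (hGsum : (∑ j : Fin m, G j) = 0)
    (hxode : ∀ t : ℝ, 0 ≤ t → ∀ i : Fin n,
      HasDerivAt (fun t => x t i) (aeval (x t) (F i)) t)
    (hyode : ∀ t : ℝ, 0 ≤ t → ∀ j : Fin m,
      HasDerivAt (fun t => y t j) (aeval (y t) (G j)) t) :
    ∃ H : Fin n × Fin m → MvPolynomial (Fin n × Fin m) ℚ,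
      (∀ ij : Fin n × Fin m, ∃ P Q : MvPolynomial (Fin n × Fin m) ℚ,
        (∀ e, 0 ≤ P.coeff e) ∧ (∀ e, 0 ≤ Q.coeff e) ∧
        P.IsHomogeneous 2 ∧ Q.IsHomogeneous 1 ∧
        P.coeff (Finsupp.single ij 2) = 0 ∧ H ij = P - X ij * Q) ∧
      (∑ ij : Fin n × Fin m, H ij) = 0 ∧
      (∀ t : ℝ, 0 ≤ t → ∀ ij : Fin n × Fin m,
        HasDerivAt (fun t => x t ij.1 * y t ij.2)
          (aeval (fun kl : Fin n × Fin m => x t kl.1 * y t kl.2) (H ij)) t) :=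
  stmt_12_general n m x y hxsum hysum F G hF hG hFsum hGsum hxode hyode
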